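/- arXiv:1611.00536 — 3 statements merged into one kernel-verified Lean document; each statement's English description precedes it below -/
import Mathlib

section
/- The 1-form η_SL = z₁₁ dz₂₂ − z₂₁ dz₁₂ restricted to the complex submanifold SL₂(ℂ) = { z ∈ M₂(ℂ) : z₁₁z₂₂ − z₂₁z₁₂ = 1 } satisfies η_SL ∧ dη_SL ≠ 0 at every point, i.e., it is a holomorphic contact form on SL₂(ℂ). -/
open Complex

/- We identify `M₂(ℂ)` with `ℂ⁴` via `q = (z₁₁, z₁₂, z₂₁, z₂₂)`. -/

/-- The contact form `η_SL = z₁₁ dz₂₂ − z₂₁ dz₁₂` at the point `q`, evaluated on a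
tangent vector `v = (dz₁₁, dz₁₂, dz₂₁, dz₂₂)`. -/
def etaSL (q v : ℂ × ℂ × ℂ × ℂ) : ℂ := q.1 * v.2.2.2 - q.2.2.1 * v.2.1

/-- The exterior derivative `dη_SL = dz₁₁ ∧ dz₂₂ − dz₂₁ ∧ dz₁₂`. -/
def dEtaSL (v w : ℂ × ℂ × ℂ × ℂ) : ℂ :=
  v.1 * w.2.2.2 - w.1 * v.2.2.2 - (v.2.2.1 * w.2.1 - w.2.2.1 * v.2.1)

/-- A vector `v` is tangent to `SL₂(ℂ) = {det = 1}` at a point `q` iff it annihilates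
the differential of the determinant. -/
def TangentSL (q v : ℂ × ℂ × ℂ × ℂ) : Prop :=
  q.1 * v.2.2.2 + v.1 * q.2.2.2 - q.2.2.1 * v.2.1 - v.2.2.1 * q.2.1 = 0

/-- The wedge product `η ∧ ω`, evaluated on three vectors. -/
def wedge13 (η : (ℂ × ℂ × ℂ × ℂ) → ℂ) (ω : (ℂ × ℂ × ℂ × ℂ) → (ℂ × ℂ × ℂ × ℂ) → ℂ)
    (v₁ v₂ v₃ : ℂ × ℂ × ℂ × ℂ) : ℂ :=
  η v₁ * ω v₂ v₃ - η v₂ * ω v₁ v₃ + η v₃ * ω v₁ v₂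

/-- `η_SL ∧ dη_SL ≠ 0` at every point of `SL₂(ℂ)`: at each `q` with `det q = 1` there are
tangent vectors on which the 3-form `η_SL ∧ dη_SL` does not vanish, i.e. `η_SL` is a
holomorphic contact form on `SL₂(ℂ)`. -/
theorem etaSL_is_contact :
    ∀ q : ℂ × ℂ × ℂ × ℂ, q.1 * q.2.2.2 - q.2.2.1 * q.2.1 = 1 →
      ∃ v₁ v₂ v₃ : ℂ × ℂ × ℂ × ℂ, TangentSL q v₁ ∧ TangentSL q v₂ ∧ TangentSL q v₃ ∧
        wedge13 (etaSL q) dEtaSL v₁ v₂ v₃ ≠ 0 := by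
  rintro ⟨a, b, c, d⟩ h
  refine ⟨(a, -b, c, -d), (0, a, 0, c), (b, 0, d, 0), ?_, ?_, ?_, ?_⟩
  · simp only [TangentSL]; ring
  · simp only [TangentSL]; ring
  · simp only [TangentSL]; ring
  · simp only [wedge13, etaSL, dEtaSL]
    have : (a * -d - c * -b) * (0 * 0 - b * c - (0 * 0 - d * a)) -
        (a * c - c * a) * (a * 0 - b * -d - (c * 0 - d * -b)) +
        (a * 0 - c * 0) * (a * c - 0 * -d - (c * a - 0 * -b)) = -1 := by
      linear_combination (-(a*d) + c*b - 1) * h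
    rw [this]
    norm_num
end

section
/- Moreover, for each pair (i,j) with i ≠ j from the three coordinates, the sequence of pairs of coordinates ((e^{−j},−e^{j}), (e^{−j}, j), (−e^{j}, j)) diverges in ℂ², i.e., the projections of pⱼ = (e^{−j}, −e^{j}, j) to every coordinate ℂ² are proper-divergent, yet {𝔜(pⱼ)} is bounded in M₂(ℂ). -/
open Complex Matrix Filter

/-- The map `𝔜 : ℂ³ → M₂(ℂ)`. -/
noncomputable def Ygot (p : ℂ × ℂ × ℂ) : Matrix (Fin 2) (Fin 2) ℂ :=
  !![Complex.exp (-p.2.2), p.1 * Complex.exp p.2.2;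
     p.2.1 * Complex.exp (-p.2.2), (1 + p.1 * p.2.1) * Complex.exp p.2.2]

/-- The sequence `pⱼ = (e^{−j}, −e^{j}, j)`. -/
noncomputable def pseq (j : ℕ) : ℂ × ℂ × ℂ :=
  (Complex.exp (-(j : ℂ)), -Complex.exp (j : ℂ), (j : ℂ))

/-- The projections of `pⱼ = (e^{−j}, −e^{j}, j)` to each of the three coordinate
planes `ℂ²` are divergent (their norms tend to `+∞`), yet `{𝔜(pⱼ)}` is bounded
in `M₂(ℂ)` (all entries uniformly bounded). -/
theorem Ygot_not_proper_all_projections :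
    Tendsto (fun j : ℕ => ‖((pseq j).1, (pseq j).2.1)‖) atTop atTop
    ∧ Tendsto (fun j : ℕ => ‖((pseq j).1, (pseq j).2.2)‖) atTop atTop
    ∧ Tendsto (fun j : ℕ => ‖((pseq j).2.1, (pseq j).2.2)‖) atTop atTop
    ∧ ∃ C : ℝ, ∀ j : ℕ, ∀ a b : Fin 2, ‖Ygot (pseq j) a b‖ ≤ C := by
  have hexp : Tendsto (fun j : ℕ => Real.exp j) atTop atTop :=
    Real.tendsto_exp_atTop.comp tendsto_natCast_atTop_atTop
  have hnat : Tendsto (fun j : ℕ => (j : ℝ)) atTop atTop :=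
    tendsto_natCast_atTop_atTop
  refine ⟨?_, ?_, ?_, ?_⟩
  · refine tendsto_atTop_mono (fun j => ?_) hexp
    calc Real.exp j = ‖(pseq j).2.1‖ := by
          simp [pseq, Complex.norm_exp]
      _ ≤ _ := norm_snd_le ((pseq j).1, (pseq j).2.1)
  · refine tendsto_atTop_mono (fun j => ?_) hnat
    calc (j : ℝ) = ‖(pseq j).2.2‖ := by simp [pseq]
      _ ≤ _ := norm_snd_le ((pseq j).1, (pseq j).2.2)
  · refine tendsto_atTop_mono (fun j => ?_) hnat
    calc (j : ℝ) = ‖(pseq j).2.2‖ := by simp [pseq]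
      _ ≤ _ := norm_snd_le ((pseq j).2.1, (pseq j).2.2)
  · refine ⟨1, fun j a b => ?_⟩
    have h1 : Complex.exp (-(j : ℂ)) * Complex.exp (j : ℂ) = 1 := by
      rw [← Complex.exp_add]; simp
    fin_cases a <;> fin_cases b <;>
      simp [Ygot, pseq, Complex.norm_exp, h1,
        Real.exp_le_one_iff, ← Real.exp_add]
end

section
/- Let F = (X,Y,Z) : M → ℂ³ be a continuous map on a topological space M such that max{|X|, −Re Z} : M → [0,∞) is a proper map. Then 𝔜∘F : M → SL₂(ℂ) ⊂ M₂(ℂ) is a proper map, where 𝔜(x,y,z) = [[e^{−z}, x e^{z}], [y e^{−z}, (1+xy)e^{z}]]. -/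
open Complex Matrix Filter Set

lemma key_ineq (a r : ℝ) (ha : 0 ≤ a) :
    min (Real.exp (max a (-r))) (2 * Real.sqrt (max a (-r))) ≤
      Real.exp (-r) + a * Real.exp r := by
  rcases le_total a (-r) with h | h
  · rw [max_eq_right h]
    refine le_trans (min_le_left _ _) ?_
    have : 0 ≤ a * Real.exp r := by positivity
    linarith
  · rw [max_eq_left h]
    refine le_trans (min_le_right _ _) ?_
    have h1 : Real.sqrt a ^ 2 = a := Real.sq_sqrt ha
    have h2 : Real.sqrt (Real.exp (-r)) ^ 2 = Real.exp (-r) :=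
      Real.sq_sqrt (Real.exp_nonneg _)
    have h3 : Real.sqrt (Real.exp r) ^ 2 = Real.exp r :=
      Real.sq_sqrt (Real.exp_nonneg _)
    have h4 : Real.sqrt (Real.exp (-r)) * Real.sqrt (Real.exp r) = 1 := by
      rw [← Real.sqrt_mul (Real.exp_nonneg _), ← Real.exp_add]
      simp
    nlinarith [sq_nonneg (Real.sqrt a * Real.sqrt (Real.exp r) - Real.sqrt (Real.exp (-r))),
      Real.sqrt_nonneg a, Real.sqrt_nonneg (Real.exp r), Real.sqrt_nonneg (Real.exp (-r))]

/-- If `F = (X,Y,Z) : M → ℂ³` is continuous and `max{|X|, −Re Z} : M → [0,∞)` is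
proper, then `𝔜∘F : M → SL₂(ℂ) ⊂ M₂(ℂ)` is a proper map. -/
theorem Ygot_comp_proper {M : Type*} [TopologicalSpace M]
    (F : M → ℂ × ℂ × ℂ) (hF : Continuous F)
    (hprop : IsProperMap (fun p : M => max ‖(F p).1‖ (-((F p).2.2).re))) :
    IsProperMap (fun p : M => Ygot (F p)) := by
  set m : M → ℝ := fun p => max ‖(F p).1‖ (-((F p).2.2).re) with hm
  -- m tends to atTop along cocompact
  have hm0 : ∀ p, 0 ≤ m p := fun p => le_max_of_le_left (norm_nonneg _)
  have hmT : Tendsto m (cocompact M) atTop := by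
    have h1 : Tendsto m (cocompact M) (cocompact ℝ) :=
      (isProperMap_iff_tendsto_cocompact.mp hprop).2
    have h2 : Tendsto (fun p => ‖m p‖) (cocompact M) atTop :=
      tendsto_norm_cocompact_atTop.comp h1
    refine h2.congr fun p => Real.norm_of_nonneg (hm0 p)
  -- continuity
  have hcont : Continuous (fun p : M => Ygot (F p)) := by
    apply continuous_matrix
    intro i j
    fin_cases i <;> fin_cases j <;>
      simp only [Ygot, Fin.zero_eta, Fin.mk_one, Fin.isValue, Matrix.cons_val', Matrix.cons_val_zero,
        Matrix.cons_val_one, Matrix.head_cons, Matrix.empty_val', Matrix.cons_val_fin_one,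
        Matrix.head_fin_const, Matrix.of_apply] <;> fun_prop
  haveI : CompactlyGeneratedSpace (Matrix (Fin 2) (Fin 2) ℂ) :=
    inferInstanceAs (CompactlyGeneratedSpace (Fin 2 → Fin 2 → ℂ))
  rw [isProperMap_iff_tendsto_cocompact]
  refine ⟨hcont, ?_⟩
  -- auxiliary functional on matrices
  set φ : Matrix (Fin 2) (Fin 2) ℂ → ℝ := fun A => ‖A 0 0‖ + ‖A 0 1‖ with hφ
  have hφc : Continuous φ := by
    apply Continuous.add <;> exact ((continuous_apply _).comp (continuous_apply _)).norm
  have hφf : ∀ p, φ (Ygot (F p)) = Real.exp (-((F p).2.2).re) + ‖(F p).1‖ * Real.exp ((F p).2.2).re := by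
    intro p
    simp only [Ygot, hφ, Matrix.cons_val', Matrix.cons_val_zero, Matrix.cons_val_one,
      Matrix.head_cons, Matrix.empty_val', Matrix.cons_val_fin_one, Matrix.of_apply,
      norm_mul, _root_.map_mul, Complex.norm_exp, Complex.neg_re]
  -- φ ∘ f tends to atTop
  have hlow : Tendsto (fun p => min (Real.exp (m p)) (2 * Real.sqrt (m p)))
      (cocompact M) atTop := by
    rw [tendsto_atTop]
    intro b
    have he : ∀ᶠ p in cocompact M, b ≤ Real.exp (m p) :=
      (Real.tendsto_exp_atTop.comp hmT).eventually_ge_atTop b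
    have hs : ∀ᶠ p in cocompact M, b ≤ 2 * Real.sqrt (m p) := by
      filter_upwards [hmT.eventually_ge_atTop ((max 0 b) ^ 2)] with p hp
      have h1 : max 0 b ≤ Real.sqrt (m p) := by
        have := Real.sqrt_le_sqrt hp
        rwa [Real.sqrt_sq (le_max_left 0 b)] at this
      have h2 : 0 ≤ Real.sqrt (m p) := Real.sqrt_nonneg _
      have := le_max_right 0 b
      linarith
    filter_upwards [he, hs] with p h1 h2 using le_min h1 h2
  have hφT : Tendsto (fun p => φ (Ygot (F p))) (cocompact M) atTop := by
    refine tendsto_atTop_mono (fun p => ?_) hlow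
    rw [hφf]
    exact key_ineq ‖(F p).1‖ ((F p).2.2).re (norm_nonneg _)
  -- conclude cocompact tendsto
  rw [hasBasis_cocompact.tendsto_right_iff]
  intro K hK
  obtain ⟨C, hC⟩ := (hK.image hφc).bddAbove
  filter_upwards [hφT.eventually_gt_atTop C] with p hp hmem
  exact absurd (hC (mem_image_of_mem φ hmem)) (not_le.mpr hp)
end
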